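/- Let f : ℝ → ℝ be four times continuously differentiable near a simple root α (f(α)=0, f'(α)≠0). Define y(x) = x - f(x)/f'(x) and the harmonic-mean Newton iterate H(x) = x - (f(x)/2)·(1/f'(x) + 1/f'(y(x))). Then there exist a neighborhood U of α and C > 0 such that for all x ∈ U where the iterate is defined, |H(x) - α| ≤ C·|x - α|³. -/

import Mathlib

/-!
The iteration map `H x = x - f x * w x`, where `w` is the reciprocal of the harmonic mean of
`f' x` and `f' (y x)`, is `C³` at the simple root `α`, with `H α = α`. The Newton map satisfies
`y' = f f'' / f'²`, so `y' α = 0`; hence `w α = 1 / f' α` and `w' α = -f'' α / (2 f' α²)`, and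
Leibniz's rule gives `H' α = 1 - f' w = 0` and `H'' α = -(f'' w + 2 f' w') = 0` at `α`.
A function that is `Cⁿ` at `a` and whose derivatives of order `< n` vanish at `a` is
`O((x - a)ⁿ)`: by induction on `n`, using the mean value inequality on balls around `a`.
-/

open Filter Topology Asymptotics

section Taylor

variable {𝕜 E : Type*} [RCLike 𝕜] [NormedAddCommGroup E] [NormedSpace 𝕜 E] {g : 𝕜 → E} {a : 𝕜}

theorem isBigO_sub_pow_succ_of_deriv {n : ℕ} (hg : ∀ᶠ x in 𝓝 a, DifferentiableAt 𝕜 g x)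
    (hga : g a = 0) (hg' : deriv g =O[𝓝 a] fun x => (x - a) ^ n) :
    g =O[𝓝 a] fun x => (x - a) ^ (n + 1) := by
  obtain ⟨C, hC, hg'C⟩ := hg'.exists_pos
  obtain ⟨r, hr, hball⟩ := Metric.eventually_nhds_iff_ball.mp (hg.and hg'C.bound)
  refine IsBigO.of_bound C (eventually_of_mem (Metric.ball_mem_nhds a hr) fun x hx => ?_)
  have hsub : Metric.closedBall a ‖x - a‖ ⊆ Metric.ball a r :=
    Metric.closedBall_subset_ball (by rwa [← dist_eq_norm])
  have hderiv : ∀ t ∈ Metric.closedBall a ‖x - a‖, ‖deriv g t‖ ≤ C * ‖x - a‖ ^ n := by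
    intro t ht
    calc ‖deriv g t‖ ≤ C * ‖(t - a) ^ n‖ := (hball t (hsub ht)).2
      _ ≤ C * ‖x - a‖ ^ n := by
        rw [norm_pow]
        gcongr
        rwa [← dist_eq_norm]
  have hmvt := (convex_closedBall a ‖x - a‖).norm_image_sub_le_of_norm_deriv_le
    (fun t ht => (hball t (hsub ht)).1) hderiv (Metric.mem_closedBall_self (norm_nonneg _))
    (by rw [Metric.mem_closedBall, dist_eq_norm])
  rw [hga, sub_zero] at hmvt
  rwa [norm_pow, pow_succ, ← mul_assoc]

theorem isBigO_sub_pow_of_iteratedDeriv_eq_zero {n : ℕ} (hg : ContDiffAt 𝕜 n g a)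
    (hzero : ∀ k < n, iteratedDeriv k g a = 0) : g =O[𝓝 a] fun x => (x - a) ^ n := by
  induction n generalizing g with
  | zero => simpa using hg.continuousAt.tendsto.isBigO_one 𝕜
  | succ n ih =>
    have hdiff : ∀ᶠ x in 𝓝 a, DifferentiableAt 𝕜 g x :=
      (hg.eventually (by simp)).mono fun x hx => hx.differentiableAt (by simp)
    have hga : g a = 0 := by simpa using hzero 0 (by omega)
    refine isBigO_sub_pow_succ_of_deriv hdiff hga (ih (hg.derivWithin (by push_cast; rfl)) ?_)
    intro k hk
    rw [← iteratedDeriv_succ']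
    exact hzero (k + 1) (by omega)

end Taylor

section Newton

variable {𝕜 : Type*} [RCLike 𝕜] {f : 𝕜 → 𝕜} {x α : 𝕜}

noncomputable def newtonStep (f : 𝕜 → 𝕜) (x : 𝕜) : 𝕜 := x - f x / deriv f x

/-- The reciprocal of the harmonic mean `2 / (1 / a + 1 / b)` of `f' x` and `f' (newtonStep f x)`.
-/
noncomputable def invHarmonicMeanDeriv (f : 𝕜 → 𝕜) (x : 𝕜) : 𝕜 :=
  (1 / deriv f x + 1 / deriv f (newtonStep f x)) / 2

noncomputable def harmonicNewtonStep (f : 𝕜 → 𝕜) (x : 𝕜) : 𝕜 :=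
  x - f x * invHarmonicMeanDeriv f x

theorem ContDiffAt.hasDerivAt_deriv (hf : ContDiffAt 𝕜 2 f x) :
    HasDerivAt (deriv f) (deriv (deriv f) x) x :=
  ((hf.derivWithin (m := 1) (by norm_num)).differentiableAt one_ne_zero).hasDerivAt

theorem newtonStep_of_root (hroot : f α = 0) : newtonStep f α = α := by
  simp [newtonStep, hroot]

theorem contDiffAt_newtonStep {n : WithTop ℕ∞} (hf : ContDiffAt 𝕜 (n + 1) f x)
    (hx : deriv f x ≠ 0) : ContDiffAt 𝕜 n (newtonStep f) x :=
  contDiffAt_id.sub ((hf.of_le le_self_add).div (hf.derivWithin le_rfl) hx)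

theorem hasDerivAt_newtonStep (hf : ContDiffAt 𝕜 2 f x) (hx : deriv f x ≠ 0) :
    HasDerivAt (newtonStep f) (f x * deriv (deriv f) x / deriv f x ^ 2) x := by
  have hf' : HasDerivAt f (deriv f x) x := (hf.differentiableAt (by simp)).hasDerivAt
  refine ((hasDerivAt_id' x).sub (hf'.div hf.hasDerivAt_deriv hx)).congr_deriv ?_
  field_simp
  ring

theorem invHarmonicMeanDeriv_of_root (hroot : f α = 0) :
    invHarmonicMeanDeriv f α = 1 / deriv f α := by
  rw [invHarmonicMeanDeriv, newtonStep_of_root hroot]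
  ring

theorem contDiffAt_invHarmonicMeanDeriv_of_root {n : WithTop ℕ∞} (hf : ContDiffAt 𝕜 (n + 1) f α)
    (hroot : f α = 0) (hder : deriv f α ≠ 0) : ContDiffAt 𝕜 n (invHarmonicMeanDeriv f) α := by
  have hf' : ContDiffAt 𝕜 n (deriv f) α := hf.derivWithin le_rfl
  have hf'N : ContDiffAt 𝕜 n (deriv f) (newtonStep f α) := by
    rwa [newtonStep_of_root hroot]
  refine ((contDiffAt_const.div hf' hder).add (contDiffAt_const.div
    (hf'N.comp α (contDiffAt_newtonStep hf hder)) ?_)).div_const 2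
  rwa [Function.comp_apply, newtonStep_of_root hroot]

theorem hasDerivAt_invHarmonicMeanDeriv_of_root (hf : ContDiffAt 𝕜 2 f α) (hroot : f α = 0)
    (hder : deriv f α ≠ 0) :
    HasDerivAt (invHarmonicMeanDeriv f) (-deriv (deriv f) α / (2 * deriv f α ^ 2)) α := by
  have hf'' := hf.hasDerivAt_deriv
  have hN : HasDerivAt (newtonStep f) 0 α := by
    simpa [hroot] using hasDerivAt_newtonStep hf hder
  have hf''N : HasDerivAt (deriv f) (deriv (deriv f) α) (newtonStep f α) := by
    rwa [newtonStep_of_root hroot]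
  have hDN : HasDerivAt (fun x => deriv f (newtonStep f x)) 0 α :=
    (hf''N.comp α hN).congr_deriv (mul_zero _)
  have hDNα : deriv f (newtonStep f α) ≠ 0 := by rwa [newtonStep_of_root hroot]
  refine ((((hasDerivAt_const α 1).div hf'' hder).add
    ((hasDerivAt_const α 1).div hDN hDNα)).div_const 2).congr_deriv ?_
  field_simp
  ring

theorem harmonicNewtonStep_of_root (hroot : f α = 0) : harmonicNewtonStep f α = α := by
  simp [harmonicNewtonStep, hroot]

theorem contDiffAt_harmonicNewtonStep_of_root {n : WithTop ℕ∞} (hf : ContDiffAt 𝕜 (n + 1) f α)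
    (hroot : f α = 0) (hder : deriv f α ≠ 0) : ContDiffAt 𝕜 n (harmonicNewtonStep f) α :=
  contDiffAt_id.sub ((hf.of_le le_self_add).mul
    (contDiffAt_invHarmonicMeanDeriv_of_root hf hroot hder))

theorem deriv_harmonicNewtonStep_of_root (hf : ContDiffAt 𝕜 2 f α) (hroot : f α = 0)
    (hder : deriv f α ≠ 0) : deriv (harmonicNewtonStep f) α = 0 := by
  have hf' : HasDerivAt f (deriv f α) α := (hf.differentiableAt (by simp)).hasDerivAt
  refine ((hasDerivAt_id' α).sub (hf'.mul
    (hasDerivAt_invHarmonicMeanDeriv_of_root hf hroot hder))).deriv.trans ?_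
  rw [invHarmonicMeanDeriv_of_root hroot, hroot]
  field_simp
  ring

theorem iteratedDeriv_two_harmonicNewtonStep_of_root (hf : ContDiffAt 𝕜 3 f α) (hroot : f α = 0)
    (hder : deriv f α ≠ 0) : iteratedDeriv 2 (harmonicNewtonStep f) α = 0 := by
  have hf2 : ContDiffAt 𝕜 2 f α := hf.of_le (by norm_num)
  have hw : ContDiffAt 𝕜 2 (invHarmonicMeanDeriv f) α :=
    contDiffAt_invHarmonicMeanDeriv_of_root hf hroot hder
  have hw' := hasDerivAt_invHarmonicMeanDeriv_of_root hf2 hroot hder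
  unfold harmonicNewtonStep
  rw [iteratedDeriv_fun_sub (f := fun x => x) contDiffAt_id (hf2.mul hw),
    iteratedDeriv_fun_mul hf2 hw]
  simp only [iteratedDeriv_succ, iteratedDeriv_zero, deriv_id'', deriv_const', Nat.reduceAdd,
    Finset.sum_range_succ, Finset.range_one, Finset.sum_singleton, Nat.choose_zero_right,
    Nat.cast_one, hroot, mul_zero, tsub_zero, zero_mul, Nat.choose_succ_self_right, Nat.cast_ofNat,
    Nat.add_one_sub_one, hw'.deriv, zero_add, Nat.choose_self, one_mul, tsub_self,
    invHarmonicMeanDeriv_of_root hroot, one_div, zero_sub, neg_add_rev]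
  field_simp
  ring

theorem harmonicNewtonStep_sub_isBigO (hf : ContDiffAt 𝕜 4 f α) (hroot : f α = 0)
    (hder : deriv f α ≠ 0) :
    (fun x => harmonicNewtonStep f x - α) =O[𝓝 α] fun x => (x - α) ^ 3 := by
  have hH : ContDiffAt 𝕜 3 (harmonicNewtonStep f) α :=
    contDiffAt_harmonicNewtonStep_of_root hf hroot hder
  refine isBigO_sub_pow_of_iteratedDeriv_eq_zero (hH.sub contDiffAt_const) fun k hk => ?_
  rw [iteratedDeriv_fun_sub (hH.of_le (mod_cast hk.le)) contDiffAt_const, iteratedDeriv_const]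
  interval_cases k
  · simp [harmonicNewtonStep_of_root hroot]
  · simp [deriv_harmonicNewtonStep_of_root (hf.of_le (by norm_num)) hroot hder]
  · simp [iteratedDeriv_two_harmonicNewtonStep_of_root (hf.of_le (by norm_num)) hroot hder]

end Newton

theorem harmonic_newton_cubic_convergence
    (f : ℝ → ℝ) (α : ℝ) (s : Set ℝ) (hs : IsOpen s) (hαs : α ∈ s)
    (hf : ContDiffOn ℝ 4 f s) (hroot : f α = 0) (hder : deriv f α ≠ 0) :
    ∃ U ∈ nhds α, ∃ C > (0:ℝ), ∀ x ∈ U,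
      deriv f x ≠ 0 →
      deriv f (x - f x / deriv f x) ≠ 0 →
      |(x - (f x / 2) * (1 / deriv f x + 1 / deriv f (x - f x / deriv f x))) - α|
        ≤ C * |x - α| ^ 3 := by
  obtain ⟨C, hC, hbound⟩ :=
    (harmonicNewtonStep_sub_isBigO (hf.contDiffAt (hs.mem_nhds hαs)) hroot hder).exists_pos
  refine ⟨_, hbound.bound, C, hC, fun x hx _ _ => ?_⟩
  have hH : harmonicNewtonStep f x
      = x - (f x / 2) * (1 / deriv f x + 1 / deriv f (x - f x / deriv f x)) := by
    rw [harmonicNewtonStep, invHarmonicMeanDeriv, newtonStep]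
    ring
  simpa only [Set.mem_ofPred_eq, hH, Real.norm_eq_abs, abs_pow] using hx
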